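/- arXiv:2112.03211 — 3 statements merged into one kernel-verified Lean document; each statement's English description precedes it below -/
import Mathlib

section
/- Let N ≥ 0, and let p, q ∈ [0,1] with p + q > 0. Suppose H is uniformly distributed on {0,1,...,N}, and conditionally on {H = k}, the random variables E_fn and E_fp are independent, with E_fn binomial with parameters (k, p) and E_fp binomial with parameters (N−k, q). Then P[E_fn = E_fp] = (1 − (1 − (p+q))^{N+1}) / ((N+1)(p+q)). -/
/-!
Write `f k m` for the probability that independent `Binomial(k, p)` and `Binomial(m, q)` variables
agree. Pascal's rule for both binomial laws gives, index by index, a telescoping defect, whence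
`f (k+1) (m+1) = (1-p) f k (m+1) + (1-q) f (k+1) m - (1-p-q) f k m`, the coefficient form of
`∑ f k m s^k t^m = 1 / ((1 - (1-p)s)(1 - (1-q)t) - pq st)`. Summed over the
antidiagonal `k + m = N`, with the boundary values `f 0 m = (1-q)^m` and `f k 0 = (1-p)^k`, this
shows that `S N = ∑_{k+m=N} f k m` satisfies `S (N+2) = (2-p-q) S (N+1) - (1-p-q) S N`, the
recurrence of `∑_{i ≤ N} (1-p-q)^i`; multiplying by `p + q` sums the geometric series.
-/

open Finset

theorem eq_geom_sum_of_two_step {R : Type*} [CommRing R] {x : R} {s : ℕ → R} (h0 : s 0 = 1)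
    (h1 : s 1 = 1 + x) (h : ∀ n, s (n + 2) = (1 + x) * s (n + 1) - x * s n) (n : ℕ) :
    s n = ∑ i ∈ range (n + 1), x ^ i := by
  induction n using Nat.twoStepInduction with
  | zero => simp [h0]
  | one => simp [h1, sum_range_succ, add_comm]
  | more n ih0 ih1 =>
    rw [h, ih0, ih1, sum_range_succ _ (n + 2), sum_range_succ _ (n + 1)]
    ring

section

variable {R : Type*} [CommRing R]

def binomialWeight (p : R) (n k : ℕ) : R := n.choose k * p ^ k * (1 - p) ^ (n - k)

theorem binomialWeight_of_lt (p : R) {n k : ℕ} (h : n < k) : binomialWeight p n k = 0 := by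
  simp [binomialWeight, Nat.choose_eq_zero_of_lt h]

theorem binomialWeight_zero_right (p : R) (n : ℕ) : binomialWeight p n 0 = (1 - p) ^ n := by
  simp [binomialWeight]

theorem binomialWeight_succ_succ (p : R) (n k : ℕ) :
    binomialWeight p (n + 1) (k + 1)
      = (1 - p) * binomialWeight p n (k + 1) + p * binomialWeight p n k := by
  simp only [binomialWeight, Nat.choose_succ_succ, Nat.cast_add, Nat.add_sub_add_right]
  rcases lt_trichotomy n k with h | rfl | h
  · simp [Nat.choose_eq_zero_of_lt h, Nat.choose_eq_zero_of_lt (h.trans k.lt_succ_self)]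
  · rw [Nat.choose_succ_self, Nat.choose_self, Nat.sub_self, Nat.cast_zero, Nat.cast_one]
    ring
  · obtain ⟨d, rfl⟩ := Nat.exists_eq_add_of_lt h
    rw [show k + d + 1 - (k + 1) = d by omega, show k + d + 1 - k = d + 1 by omega]
    ring

def coincidence (p q : R) (k m : ℕ) : R :=
  ∑ j ∈ range (k + 1), binomialWeight p k j * binomialWeight q m j

theorem coincidence_eq_sum_range (p q : R) (k m : ℕ) {M : ℕ} (h : k < M) :
    coincidence p q k m = ∑ j ∈ range M, binomialWeight p k j * binomialWeight q m j :=
  sum_subset (range_subset_range.mpr h) fun j _ hj => by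
    rw [binomialWeight_of_lt p (by simpa using hj), zero_mul]

theorem coincidence_comm (p q : R) (k m : ℕ) : coincidence p q k m = coincidence q p m k := by
  rw [coincidence_eq_sum_range p q k m (Nat.lt_succ_of_le (Nat.le_add_right k m)),
    coincidence_eq_sum_range q p m k (Nat.lt_succ_of_le (Nat.le_add_left m k))]
  exact sum_congr rfl fun j _ => mul_comm _ _

theorem coincidence_zero_left (p q : R) (m : ℕ) : coincidence p q 0 m = (1 - q) ^ m := by
  simp [coincidence, binomialWeight]

theorem coincidence_zero_right (p q : R) (k : ℕ) : coincidence p q k 0 = (1 - p) ^ k := by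
  rw [coincidence_comm, coincidence_zero_left]

theorem coincidence_succ_succ (p q : R) (k m : ℕ) :
    coincidence p q (k + 1) (m + 1) = (1 - p) * coincidence p q k (m + 1)
      + (1 - q) * coincidence p q (k + 1) m - (1 - (p + q)) * coincidence p q k m := by
  let T (k' m' j : ℕ) : R := binomialWeight p k' j * binomialWeight q m' j
  have hj (j : ℕ) : T (k + 1) (m + 1) (j + 1) - (1 - p) * T k (m + 1) (j + 1)
      - (1 - q) * T (k + 1) m (j + 1) + (1 - (p + q)) * T k m (j + 1)
      = p * q * (T k m j - T k m (j + 1)) := by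
    linear_combination
      (binomialWeight p (k + 1) (j + 1) - (1 - p) * binomialWeight p k (j + 1))
        * binomialWeight_succ_succ q m j + q * binomialWeight q m j * binomialWeight_succ_succ p k j
  have hsum : ∑ j ∈ range (k + 2), (T (k + 1) (m + 1) j - (1 - p) * T k (m + 1) j
      - (1 - q) * T (k + 1) m j + (1 - (p + q)) * T k m j) = 0 := by
    rw [sum_range_succ', sum_congr rfl fun j _ => hj j, ← mul_sum, sum_range_sub' (T k m)]
    simp only [T, binomialWeight_of_lt p (Nat.lt_succ_self k), binomialWeight_zero_right]
    ring
  simp only [sum_add_distrib, sum_sub_distrib, ← mul_sum] at hsum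
  rw [coincidence, coincidence_eq_sum_range p q k (m + 1) (M := k + 2) (by omega),
    coincidence_eq_sum_range p q (k + 1) m (M := k + 2) (by omega),
    coincidence_eq_sum_range p q k m (M := k + 2) (by omega)]
  linear_combination hsum

def coincidenceSum (p q : R) (N : ℕ) : R := ∑ km ∈ antidiagonal N, coincidence p q km.1 km.2

theorem coincidenceSum_succ_succ (p q : R) (N : ℕ) :
    coincidenceSum p q (N + 2) = (2 - (p + q)) * coincidenceSum p q (N + 1)
      - (1 - (p + q)) * coincidenceSum p q N := by
  have h2 : coincidenceSum p q (N + 2) = (1 - q) ^ (N + 2) + (1 - p) ^ (N + 2)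
      + ∑ km ∈ antidiagonal N, coincidence p q (km.1 + 1) (km.2 + 1) := by
    rw [coincidenceSum, Nat.sum_antidiagonal_succ, Nat.sum_antidiagonal_succ']
    simp only [coincidence_zero_left, coincidence_zero_right, add_assoc]
  have h1 : coincidenceSum p q (N + 1) = (1 - q) ^ (N + 1)
      + ∑ km ∈ antidiagonal N, coincidence p q (km.1 + 1) km.2 := by
    rw [coincidenceSum, Nat.sum_antidiagonal_succ, coincidence_zero_left]
  have h1' : coincidenceSum p q (N + 1) = (1 - p) ^ (N + 1)
      + ∑ km ∈ antidiagonal N, coincidence p q km.1 (km.2 + 1) := by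
    rw [coincidenceSum, Nat.sum_antidiagonal_succ', coincidence_zero_right]
  simp only [coincidence_succ_succ, sum_sub_distrib, sum_add_distrib, ← mul_sum] at h2
  rw [← coincidenceSum] at h2
  linear_combination h2 - (1 - p) * h1' - (1 - q) * h1

theorem coincidenceSum_eq_geom_sum (p q : R) (N : ℕ) :
    coincidenceSum p q N = ∑ i ∈ range (N + 1), (1 - (p + q)) ^ i := by
  refine eq_geom_sum_of_two_step ?_ ?_ (fun n => ?_) N
  · simp [coincidenceSum, coincidence_zero_left]
  · rw [coincidenceSum, Nat.sum_antidiagonal_succ, Nat.antidiagonal_zero, sum_singleton]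
    simp only [coincidence_zero_left, coincidence_zero_right]
    ring
  · rw [coincidenceSum_succ_succ]
    ring

end

theorem stmt_0_general (N : ℕ) (p q : ℝ) (hpq : 0 < p + q) :
    (1 / ((N:ℝ) + 1)) *
      ∑ k ∈ Finset.range (N + 1), ∑ j ∈ Finset.range (k + 1),
        (k.choose j : ℝ) * ((N - k).choose j : ℝ) *
          p ^ j * (1 - p) ^ (k - j) * q ^ j * (1 - q) ^ (N - k - j)
    = (1 - (1 - (p + q)) ^ (N + 1)) / (((N:ℝ) + 1) * (p + q)) := by
  have hsum : ∑ k ∈ range (N + 1), ∑ j ∈ range (k + 1),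
        (k.choose j : ℝ) * ((N - k).choose j : ℝ) *
          p ^ j * (1 - p) ^ (k - j) * q ^ j * (1 - q) ^ (N - k - j)
      = coincidenceSum p q N := by
    rw [coincidenceSum, Nat.sum_antidiagonal_eq_sum_range_succ_mk]
    refine sum_congr rfl fun k _ => sum_congr rfl fun j _ => ?_
    simp only [binomialWeight]
    ring
  rw [hsum, coincidenceSum_eq_geom_sum, ← geom_sum_mul_neg, sub_sub_cancel]
  field_simp

theorem stmt_0 (N : ℕ) (p q : ℝ) (hp : p ∈ Set.Icc (0:ℝ) 1) (hq : q ∈ Set.Icc (0:ℝ) 1)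
    (hpq : 0 < p + q) :
    (1 / ((N:ℝ) + 1)) *
      ∑ k ∈ Finset.range (N + 1), ∑ j ∈ Finset.range (k + 1),
        (k.choose j : ℝ) * ((N - k).choose j : ℝ) *
          p ^ j * (1 - p) ^ (k - j) * q ^ j * (1 - q) ^ (N - k - j)
    = (1 - (1 - (p + q)) ^ (N + 1)) / (((N:ℝ) + 1) * (p + q)) :=
  stmt_0_general N p q hpq
end

section
/- For all integers N ≥ 0 and reals p, q ∈ [0,1], the double sum γ_N := Σ_{k=0}^{N} Σ_{j=0}^{k} C(k,j) C(N−k,j) p^j (1−p)^{k−j} q^j (1−q)^{N−k−j} satisfies the recursion γ_N = (2 − p − q) γ_{N−1} + (p + q − 1) γ_{N−2} for all N ≥ 2, with initial conditions γ_0 = 1 and γ_1 = 2 − (p+q). -/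
/-!
Write `F(a, b) = ∑ⱼ C(a,j) C(b,j) (pq)^j (1-p)^(a-j) (1-q)^(b-j)`, the probability that independent
`Bin(a, p)` and `Bin(b, q)` variables agree, so that `γ_N = ∑_{a+b=N} F(a, b)`. Pascal's rule in both
binomial coefficients gives
`F(a+1, b+1) = (1-p) F(a, b+1) + (1-q) F(a+1, b) + (pq - (1-p)(1-q)) F(a, b)`,
with `F(a, 0) = (1-p)^a` and `F(0, b) = (1-q)^b`. Summing over the antidiagonal `a + b = N`, the
boundary terms cancel and the recursion for `γ` follows, since `pq - (1-p)(1-q) = p + q - 1`.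
Here `F` is `binomMatch (p * q) (1 - p) (1 - q)`, with `x, u, v` free in any commutative ring.
-/

open Finset

section BinomMatch

variable {R : Type*} [CommRing R] (x u v : R)

def binomMatchTerm (a b j : ℕ) : R :=
  (a.choose j : R) * b.choose j * x ^ j * u ^ (a - j) * v ^ (b - j)

def binomMatch (a b : ℕ) : R :=
  ∑ j ∈ range (a + 1), binomMatchTerm x u v a b j

def binomMatchDiag (n : ℕ) : R :=
  ∑ ab ∈ antidiagonal n, binomMatch x u v ab.1 ab.2

lemma choose_succ_mul_pow_sub (a j : ℕ) :
    (a.choose (j + 1) : R) * u ^ (a - j) = u * (a.choose (j + 1) * u ^ (a - (j + 1))) := by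
  rcases lt_or_ge j a with hj | hj
  · rw [show a - j = a - (j + 1) + 1 by omega, pow_succ]
    ring
  · simp [Nat.choose_eq_zero_of_lt (Nat.lt_succ_of_le hj)]

variable {x u v}

lemma binomMatchTerm_zero (a b : ℕ) : binomMatchTerm x u v a b 0 = u ^ a * v ^ b := by
  simp [binomMatchTerm]

lemma binomMatch_zero_left (b : ℕ) : binomMatch x u v 0 b = v ^ b := by
  simp [binomMatch, binomMatchTerm]

lemma binomMatch_eq_add_sum_succ (a b : ℕ) :
    binomMatch x u v a b = u ^ a * v ^ b + ∑ j ∈ range (a + 1), binomMatchTerm x u v a b (j + 1) := by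
  rw [binomMatch, sum_range_succ', sum_range_succ (n := a), binomMatchTerm_zero, binomMatchTerm,
    Nat.choose_succ_self]
  simp only [Nat.cast_zero, zero_mul, zero_add, add_comm]

lemma binomMatch_zero_right (a : ℕ) : binomMatch x u v a 0 = u ^ a := by
  simp [binomMatch_eq_add_sum_succ, binomMatchTerm]

lemma binomMatch_succ_left_eq_add_sum_succ (a b : ℕ) :
    binomMatch x u v (a + 1) b =
      u ^ (a + 1) * v ^ b + ∑ j ∈ range (a + 1), binomMatchTerm x u v (a + 1) b (j + 1) := by
  rw [binomMatch, sum_range_succ', binomMatchTerm_zero, add_comm]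

lemma binomMatchTerm_succ_succ (a b j : ℕ) :
    binomMatchTerm x u v (a + 1) (b + 1) (j + 1) =
      u * binomMatchTerm x u v a (b + 1) (j + 1) + v * binomMatchTerm x u v (a + 1) b (j + 1)
        + x * binomMatchTerm x u v a b j - u * v * binomMatchTerm x u v a b (j + 1) := by
  have hu := choose_succ_mul_pow_sub u a j
  have hv := choose_succ_mul_pow_sub v b j
  simp only [binomMatchTerm, Nat.add_sub_add_right, Nat.choose_succ_succ', Nat.cast_add]
  linear_combination (b.choose j * x ^ (j + 1) * v ^ (b - j)) * hu
    + ((a.choose j + a.choose (j + 1)) * x ^ (j + 1) * u ^ (a - j)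
      - x ^ (j + 1) * u * a.choose (j + 1) * u ^ (a - (j + 1))) * hv

lemma binomMatch_succ_succ (a b : ℕ) :
    binomMatch x u v (a + 1) (b + 1) = u * binomMatch x u v a (b + 1)
      + v * binomMatch x u v (a + 1) b + (x - u * v) * binomMatch x u v a b := by
  have hab := binomMatch_eq_add_sum_succ (x := x) (u := u) (v := v) a b
  rw [binomMatch_succ_left_eq_add_sum_succ, binomMatch_succ_left_eq_add_sum_succ,
    binomMatch_eq_add_sum_succ (b := b + 1)]
  simp only [binomMatchTerm_succ_succ, sum_add_distrib, sum_sub_distrib, ← mul_sum]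
  rw [← binomMatch]
  linear_combination u * v * hab

lemma binomMatchDiag_zero : binomMatchDiag x u v 0 = 1 := by
  simp [binomMatchDiag, binomMatch, binomMatchTerm]

lemma binomMatchDiag_one : binomMatchDiag x u v 1 = u + v := by
  rw [binomMatchDiag, Nat.sum_antidiagonal_succ, Nat.antidiagonal_zero, sum_singleton,
    binomMatch_zero_left, binomMatch_zero_right, pow_one, pow_one, add_comm]

lemma binomMatchDiag_add_two (n : ℕ) :
    binomMatchDiag x u v (n + 2) =
      (u + v) * binomMatchDiag x u v (n + 1) + (x - u * v) * binomMatchDiag x u v n := by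
  have hleft := Nat.sum_antidiagonal_succ (n := n) (f := fun ab => binomMatch x u v ab.1 ab.2)
  have hright := Nat.sum_antidiagonal_succ' (n := n) (f := fun ab => binomMatch x u v ab.1 ab.2)
  simp only [binomMatchDiag] at hleft hright ⊢
  rw [Nat.sum_antidiagonal_succ, Nat.sum_antidiagonal_succ']
  simp only [binomMatch_succ_succ, sum_add_distrib, ← mul_sum, binomMatch_zero_left,
    binomMatch_zero_right] at hleft hright ⊢
  linear_combination -u * hright - v * hleft

end BinomMatch

theorem stmt_1_general (p q : ℝ)
    (γ : ℕ → ℝ)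
    (hγ : ∀ n : ℕ, γ n =
      ∑ k ∈ Finset.range (n + 1), ∑ j ∈ Finset.range (k + 1),
        (k.choose j : ℝ) * ((n - k).choose j : ℝ) *
          p ^ j * (1 - p) ^ (k - j) * q ^ j * (1 - q) ^ (n - k - j)) :
    γ 0 = 1 ∧ γ 1 = 2 - (p + q) ∧
      ∀ N : ℕ, 2 ≤ N → γ N = (2 - p - q) * γ (N - 1) + (p + q - 1) * γ (N - 2) := by
  have hγD : ∀ n, γ n = binomMatchDiag (p * q) (1 - p) (1 - q) n := by
    intro n
    rw [hγ, binomMatchDiag, Nat.sum_antidiagonal_eq_sum_range_succ_mk]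
    refine sum_congr rfl fun k _ => sum_congr rfl fun j _ => ?_
    rw [binomMatchTerm, mul_pow]
    ring
  refine ⟨by rw [hγD, binomMatchDiag_zero], by rw [hγD, binomMatchDiag_one]; ring, ?_⟩
  rintro N hN
  obtain ⟨n, rfl⟩ := Nat.exists_eq_add_of_le' hN
  simp only [hγD, Nat.add_sub_cancel, show n + 2 - 1 = n + 1 by omega, binomMatchDiag_add_two]
  ring

theorem stmt_1 (p q : ℝ) (hp : p ∈ Set.Icc (0:ℝ) 1) (hq : q ∈ Set.Icc (0:ℝ) 1)
    (γ : ℕ → ℝ)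
    (hγ : ∀ n : ℕ, γ n =
      ∑ k ∈ Finset.range (n + 1), ∑ j ∈ Finset.range (k + 1),
        (k.choose j : ℝ) * ((n - k).choose j : ℝ) *
          p ^ j * (1 - p) ^ (k - j) * q ^ j * (1 - q) ^ (n - k - j)) :
    γ 0 = 1 ∧ γ 1 = 2 - (p + q) ∧
      ∀ N : ℕ, 2 ≤ N → γ N = (2 - p - q) * γ (N - 1) + (p + q - 1) * γ (N - 2) :=
  stmt_1_general p q γ hγ
end

section
/- For integers N ≥ 0 and reals p, q ∈ [0,1], the double sum Σ_{k=0}^{N} Σ_{j=0}^{k} C(k,j) C(N−k,j) p^j (1−p)^{k−j} q^j (1−q)^{N−k−j} depends on p and q only through their sum p + q; i.e., if p + q = p' + q' with p', q' ∈ [0,1], the two corresponding double sums are equal. -/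
open Finset

/-!
Put `r = 1 - p`, `s = 1 - q`, `x = p q`. The inner sum `A(a, b)` (with `a = k`, `b = N - k`) is the
coefficient of `u^a v^b` in `1 / ((1 - r u)(1 - s v) - x u v)`, so it obeys
`A(a+1, b+1) = r A(a, b+1) + s A(a+1, b) - (r s - x) A(a, b)` with `A(a, 0) = r^a`, `A(0, b) = s^b`.
Summed over `a + b = N` this gives `F(N+2) = (r + s) F(N+1) - (r s - x) F(N)`, `F(0) = 1`,
`F(1) = r + s`; hence `F(N)` depends only on `r + s = 2 - (p + q)` and `r s - x = 1 - (p + q)`.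
-/

namespace ChoosePairSum

-- Also true for `n ≤ i`, where the binomial coefficient vanishes; this absorbs the truncated
-- subtractions in the exponents.
theorem choose_succ_mul_pow_sub {R : Type*} [CommSemiring R] (r : R) (n i : ℕ) :
    (n.choose (i + 1) : R) * r ^ (n - i) = n.choose (i + 1) * r ^ (n - (i + 1)) * r := by
  rcases le_or_gt (i + 1) n with h | h
  · rw [mul_assoc, ← pow_succ]
    congr 2
    omega
  · simp [Nat.choose_eq_zero_of_lt h]

variable {R : Type*} [CommRing R] (x r s : R)

def choosePairSum (a b : ℕ) : R :=
  ∑ j ∈ range (a + 1), (a.choose j : R) * b.choose j * x ^ j * r ^ (a - j) * s ^ (b - j)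

def choosePairSumShift (a b : ℕ) : R :=
  ∑ j ∈ range (a + 1),
    (a.choose j : R) * b.choose (j + 1) * x ^ j * r ^ (a - j) * s ^ (b - (j + 1))

def antidiagSum (N : ℕ) : R :=
  ∑ ij ∈ antidiagonal N, choosePairSum x r s ij.1 ij.2

theorem choosePairSum_zero_left (b : ℕ) : choosePairSum x r s 0 b = s ^ b := by
  simp [choosePairSum]

theorem choosePairSum_zero_right (a : ℕ) : choosePairSum x r s a 0 = r ^ a := by
  rw [choosePairSum, sum_range_succ']
  simp

theorem choosePairSum_succ_left (a b : ℕ) :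
    choosePairSum x r s (a + 1) b =
      r * choosePairSum x r s a b + x * choosePairSumShift x r s a b := by
  have hA : choosePairSum x r s a b = ∑ j ∈ range (a + 1), (a.choose (j + 1) : R) *
      b.choose (j + 1) * x ^ (j + 1) * r ^ (a - (j + 1)) * s ^ (b - (j + 1)) + r ^ a * s ^ b := by
    rw [choosePairSum, sum_range_succ', sum_range_succ _ a]
    simp
  rw [hA, choosePairSum, choosePairSumShift, sum_range_succ' _ (a + 1), mul_add, mul_sum, mul_sum,
    add_right_comm, ← sum_add_distrib]
  congr 1
  · refine sum_congr rfl fun j _ => ?_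
    rw [Nat.choose_succ_succ, Nat.add_sub_add_right, Nat.cast_add]
    linear_combination ((b.choose (j + 1) : R) * x ^ (j + 1) * s ^ (b - (j + 1))) *
      choose_succ_mul_pow_sub r a j
  · simp only [Nat.choose_zero_right, Nat.cast_one, pow_zero, tsub_zero, mul_one, one_mul]
    ring

theorem choosePairSumShift_succ_right (a b : ℕ) :
    choosePairSumShift x r s a (b + 1) =
      choosePairSum x r s a b + s * choosePairSumShift x r s a b := by
  rw [choosePairSum, choosePairSumShift, choosePairSumShift, mul_sum, ← sum_add_distrib]
  refine sum_congr rfl fun j _ => ?_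
  rw [Nat.choose_succ_succ, Nat.add_sub_add_right, Nat.cast_add]
  linear_combination ((a.choose j : R) * x ^ j * r ^ (a - j)) * choose_succ_mul_pow_sub s b j

theorem choosePairSum_succ_succ (a b : ℕ) :
    choosePairSum x r s (a + 1) (b + 1) = r * choosePairSum x r s a (b + 1)
      + s * choosePairSum x r s (a + 1) b - (r * s - x) * choosePairSum x r s a b := by
  linear_combination choosePairSum_succ_left x r s a (b + 1)
    + x * choosePairSumShift_succ_right x r s a b - s * choosePairSum_succ_left x r s a b

theorem antidiagSum_zero : antidiagSum x r s 0 = 1 := by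
  simp [antidiagSum, choosePairSum]

theorem antidiagSum_one : antidiagSum x r s 1 = r + s := by
  rw [antidiagSum, Nat.sum_antidiagonal_succ, Nat.antidiagonal_zero, sum_singleton,
    choosePairSum_zero_left, choosePairSum_zero_right]
  ring

theorem antidiagSum_succ_succ (N : ℕ) :
    antidiagSum x r s (N + 2) = (r + s) * antidiagSum x r s (N + 1)
      - (r * s - x) * antidiagSum x r s N := by
  have hleft : antidiagSum x r s (N + 1) =
      s ^ (N + 1) + ∑ ij ∈ antidiagonal N, choosePairSum x r s (ij.1 + 1) ij.2 := by
    rw [antidiagSum, Nat.sum_antidiagonal_succ, choosePairSum_zero_left]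
  have hright : antidiagSum x r s (N + 1) =
      r ^ (N + 1) + ∑ ij ∈ antidiagonal N, choosePairSum x r s ij.1 (ij.2 + 1) := by
    rw [antidiagSum, Nat.sum_antidiagonal_succ', choosePairSum_zero_right]
  have hsucc : antidiagSum x r s (N + 2) = s ^ (N + 2) + r ^ (N + 2) +
      ∑ ij ∈ antidiagonal N, choosePairSum x r s (ij.1 + 1) (ij.2 + 1) := by
    rw [antidiagSum, Nat.sum_antidiagonal_succ, Nat.sum_antidiagonal_succ',
      choosePairSum_zero_left, choosePairSum_zero_right, ← add_assoc]
  simp only [choosePairSum_succ_succ, sum_sub_distrib, sum_add_distrib, ← mul_sum] at hsucc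
  simp only [antidiagSum] at *
  linear_combination hsucc - r * hright - s * hleft

theorem antidiagSum_eq_of_add_eq_of_mul_sub_eq {x' r' s' : R} (hadd : r + s = r' + s')
    (hmul : r * s - x = r' * s' - x') (N : ℕ) : antidiagSum x r s N = antidiagSum x' r' s' N := by
  induction N using Nat.twoStepInduction with
  | zero => rw [antidiagSum_zero, antidiagSum_zero]
  | one => rw [antidiagSum_one, antidiagSum_one, hadd]
  | more N ih ih' => rw [antidiagSum_succ_succ, antidiagSum_succ_succ, ih, ih', hadd, hmul]

theorem sum_range_sum_range_eq_antidiagSum (p q : R) (N : ℕ) :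
    ∑ k ∈ range (N + 1), ∑ j ∈ range (k + 1),
        (k.choose j : R) * ((N - k).choose j : R) *
          p ^ j * (1 - p) ^ (k - j) * q ^ j * (1 - q) ^ (N - k - j)
      = antidiagSum (p * q) (1 - p) (1 - q) N := by
  rw [antidiagSum, Nat.sum_antidiagonal_eq_sum_range_succ (choosePairSum (p * q) (1 - p) (1 - q))]
  refine sum_congr rfl fun k _ => sum_congr rfl fun j _ => ?_
  ring

end ChoosePairSum

theorem stmt_2_general (N : ℕ) (p q p' q' : ℝ)
    (hsum : p + q = p' + q') :
    ∑ k ∈ Finset.range (N + 1), ∑ j ∈ Finset.range (k + 1),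
        (k.choose j : ℝ) * ((N - k).choose j : ℝ) *
          p ^ j * (1 - p) ^ (k - j) * q ^ j * (1 - q) ^ (N - k - j)
    = ∑ k ∈ Finset.range (N + 1), ∑ j ∈ Finset.range (k + 1),
        (k.choose j : ℝ) * ((N - k).choose j : ℝ) *
          p' ^ j * (1 - p') ^ (k - j) * q' ^ j * (1 - q') ^ (N - k - j) := by
  rw [ChoosePairSum.sum_range_sum_range_eq_antidiagSum,
    ChoosePairSum.sum_range_sum_range_eq_antidiagSum]
  exact ChoosePairSum.antidiagSum_eq_of_add_eq_of_mul_sub_eq _ _ _ (by linarith)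
    (by linear_combination -hsum) N

theorem stmt_2 (N : ℕ) (p q p' q' : ℝ)
    (hp : p ∈ Set.Icc (0:ℝ) 1) (hq : q ∈ Set.Icc (0:ℝ) 1)
    (hp' : p' ∈ Set.Icc (0:ℝ) 1) (hq' : q' ∈ Set.Icc (0:ℝ) 1)
    (hsum : p + q = p' + q') :
    ∑ k ∈ Finset.range (N + 1), ∑ j ∈ Finset.range (k + 1),
        (k.choose j : ℝ) * ((N - k).choose j : ℝ) *
          p ^ j * (1 - p) ^ (k - j) * q ^ j * (1 - q) ^ (N - k - j)
    = ∑ k ∈ Finset.range (N + 1), ∑ j ∈ Finset.range (k + 1),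
        (k.choose j : ℝ) * ((N - k).choose j : ℝ) *
          p' ^ j * (1 - p') ^ (k - j) * q' ^ j * (1 - q') ^ (N - k - j) :=
  stmt_2_general N p q p' q' hsum
end
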